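/- arXiv:1807.11360 — 2 statements merged into one kernel-verified Lean document; each statement's English description precedes it below -/
import Mathlib

section
/- Let q be a prime power and 1 ≤ m ≤ n ≤ q−1. If gcd(m, q−1) = 1 or gcd(n, q−1) = 1, then the monomial digraph D(q; m, n) is strong and diam(D(q; m, n)) ≤ 4. -/
/-- `walkLen r k x y` means there is a directed walk of length exactly `k`
from `x` to `y` in the digraph with arc relation `r`. -/
def walkLen {V : Type*} (r : V → V → Prop) : ℕ → V → V → Prop
  | 0 => fun x y => x = y
  | k + 1 => fun x y => ∃ z, r x z ∧ walkLen r k z y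

/-- The distance from `x` to `y`: the minimum length of a directed walk,
`⊤` if `y` is not reachable from `x`. -/
noncomputable def ddist {V : Type*} (r : V → V → Prop) (x y : V) : ℕ∞ :=
  ⨅ n ∈ {n : ℕ | walkLen r n x y}, (n : ℕ∞)

/-- The diameter of the digraph: the maximum of distances over all ordered pairs. -/
noncomputable def ddiam {V : Type*} (r : V → V → Prop) : ℕ∞ :=
  ⨆ x, ⨆ y, ddist r x y

/-- A digraph is strong if every vertex is reachable from every vertex. -/
def IsStrongDigraph {V : Type*} (r : V → V → Prop) : Prop :=
  ∀ x y : V, ∃ n : ℕ, walkLen r n x y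

/-- The arc relation of the monomial digraph `D(q; m, n)`:
`(x₁, x₂) → (y₁, y₂)` iff `x₂ + y₂ = x₁ ^ m * y₁ ^ n`. -/
def monomialArc {F : Type*} [Field F] (m n : ℕ) (x y : F × F) : Prop :=
  x.2 + y.2 = x.1 ^ m * y.1 ^ n

/-!
If `gcd(m, q - 1) = 1`, then `a ↦ a ^ m` is onto `F_q` (it is an automorphism of the unit group
`F_qˣ` of order `q - 1`), and any two vertices are joined by the walk
`x → (0, -x₂) → (s, x₂) → (1, y₁ⁿ - y₂) → y` of length exactly four, with `sᵐ = x₂ + y₁ⁿ - y₂`: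
the arcs into and out of a vertex `(0, b)` are exactly those to and from vertices `(c, -b)`.
Reversing all arcs of `D(q; m, n)` gives `D(q; n, m)`, which settles the case
`gcd(n, q - 1) = 1`.
-/

section Walks

variable {V : Type*} (r : V → V → Prop)

theorem walkLen_succ' {k : ℕ} {x y : V} :
    walkLen r (k + 1) x y ↔ ∃ z, walkLen r k x z ∧ r z y := by
  induction k generalizing x with
  | zero => simp [walkLen]
  | succ k ih =>
    change (∃ z, r x z ∧ walkLen r (k + 1) z y) ↔ ∃ z, (∃ w, r x w ∧ walkLen r k w z) ∧ r z y
    simp only [ih]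
    exact ⟨fun ⟨w, hxw, z, hwz, hzy⟩ => ⟨z, ⟨w, hxw, hwz⟩, hzy⟩,
      fun ⟨z, ⟨w, hxw, hwz⟩, hzy⟩ => ⟨w, hxw, z, hwz, hzy⟩⟩

theorem walkLen_flip {k : ℕ} {x y : V} : walkLen (flip r) k x y ↔ walkLen r k y x := by
  induction k generalizing x y with
  | zero => exact eq_comm
  | succ k ih =>
    rw [walkLen_succ']
    exact exists_congr fun z => by rw [ih]; exact and_comm

theorem ddiam_le_of_forall_walkLen {k : ℕ} (h : ∀ x y, walkLen r k x y) : ddiam r ≤ k :=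
  iSup₂_le fun x y => iInf₂_le k (h x y)

end Walks

theorem pow_surjective_of_coprime_card_sub_one {F : Type*} [Field F] [Fintype F] {k : ℕ}
    (hk : k ≠ 0) (h : Nat.Coprime k (Fintype.card F - 1)) :
    Function.Surjective fun a : F => a ^ k := by
  intro c
  rcases eq_or_ne c 0 with rfl | hc
  · exact ⟨0, zero_pow hk⟩
  · have hcard : (Nat.card Fˣ).Coprime k := by
      rwa [Nat.card_units, Nat.card_eq_fintype_card, Nat.coprime_comm]
    obtain ⟨v, hv⟩ := (powCoprime hcard).surjective (Units.mk0 c hc)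
    exact ⟨v, by simpa using congrArg Units.val hv⟩

section MonomialDigraph

variable {F : Type*} [Field F] {m n : ℕ}

theorem flip_monomialArc : flip (monomialArc (F := F) m n) = monomialArc n m := by
  ext x y
  simp only [flip, monomialArc, add_comm, mul_comm]

theorem walkLen_monomialArc_four (hm : m ≠ 0) (hn : n ≠ 0)
    (hsurj : Function.Surjective fun a : F => a ^ m) (x y : F × F) :
    walkLen (monomialArc m n) 4 x y := by
  obtain ⟨s, hs⟩ := hsurj (x.2 + (y.1 ^ n - y.2))
  refine ⟨(0, -x.2), ?_, (s, x.2), ?_, (1, y.1 ^ n - y.2), ?_, y, ?_, rfl⟩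
  · simp [monomialArc, zero_pow hn]
  · simp [monomialArc, zero_pow hm]
  · simpa [monomialArc] using hs.symm
  · simp [monomialArc]

end MonomialDigraph

theorem strong_and_diam_le_four_of_gcd_one_general {p e m n : ℕ}
    (F : Type*) [Field F] [Fintype F] (hF : Fintype.card F = p ^ e)
    (hm : 1 ≤ m) (hmn : m ≤ n)
    (hgcd : Nat.gcd m (p ^ e - 1) = 1 ∨ Nat.gcd n (p ^ e - 1) = 1) :
    IsStrongDigraph (monomialArc (F := F) m n) ∧
      ddiam (monomialArc (F := F) m n) ≤ 4 := by
  have hm0 : m ≠ 0 := by omega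
  have hn0 : n ≠ 0 := by omega
  rw [← hF] at hgcd
  have walk : ∀ x y : F × F, walkLen (monomialArc m n) 4 x y := by
    rcases hgcd with hg | hg
    · exact walkLen_monomialArc_four hm0 hn0 (pow_surjective_of_coprime_card_sub_one hm0 hg)
    · intro x y
      rw [← flip_monomialArc, walkLen_flip]
      exact walkLen_monomialArc_four hn0 hm0 (pow_surjective_of_coprime_card_sub_one hn0 hg) y x
  exact ⟨fun x y => ⟨4, walk x y⟩, ddiam_le_of_forall_walkLen _ walk⟩

theorem strong_and_diam_le_four_of_gcd_one {p e m n : ℕ} (hp : p.Prime) (he : 0 < e)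
    (F : Type*) [Field F] [Fintype F] (hF : Fintype.card F = p ^ e)
    (hm : 1 ≤ m) (hmn : m ≤ n) (hn : n ≤ p ^ e - 1)
    (hgcd : Nat.gcd m (p ^ e - 1) = 1 ∨ Nat.gcd n (p ^ e - 1) = 1) :
    IsStrongDigraph (monomialArc (F := F) m n) ∧
      ddiam (monomialArc (F := F) m n) ≤ 4 :=
  strong_and_diam_le_four_of_gcd_one_general F hF hm hmn hgcd
end

section
/- Let p be a prime and 1 ≤ m ≤ n ≤ p−1. If m ≠ p−1 or n ≠ p−1, then diam(D(p; m, n)) ≤ 2p − 2. -/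
/-!
Transport along `ZMod p ≃+* F` reduces everything to `F = ZMod p`. Walks are assembled from short
gadgets that translate the second coordinate. If `m, n ≤ p - 2`, the walk
`(1, s) → (t, tⁿ - s) → (0, s - tⁿ) → (v, tⁿ - s) → (1, s + vᵐ - tⁿ)`
translates by any element of `{vᵐ} - {tⁿ}`. If `n = p - 1`, then `uⁿ = 1` for `u ≠ 0`, and the walk
`(w, s) → (u, wᵐ - s) → (v, s + uᵐ - wᵐ)` translates by `uᵐ - wᵐ` for any nonzero `u, v`.
Since `m < p - 1`, some nonzero `m`-th power differs from `1`, so the sets of translations have at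
least `5` resp. `3` elements, and iterated Cauchy–Davenport shows that about `p / 4` resp. `p / 2`
gadgets reach every translation. For `p = 3` the two remaining digraphs are checked directly.
-/

open Finset Pointwise

section Walks

variable {V W : Type*} {r : V → V → Prop} {s : W → W → Prop}

theorem walkLen_one {x y : V} : walkLen r 1 x y ↔ r x y :=
  ⟨fun ⟨_, h, hy⟩ => hy ▸ h, fun h => ⟨y, h, rfl⟩⟩

theorem walkLen_add {j k : ℕ} {x y z : V} (hxy : walkLen r j x y) (hyz : walkLen r k y z) :
    walkLen r (j + k) x z := by
  induction j generalizing x with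
  | zero => rw [Nat.zero_add]; exact (show x = y from hxy) ▸ hyz
  | succ j ih =>
    obtain ⟨w, hxw, hwy⟩ := hxy
    rw [Nat.succ_add]
    exact ⟨w, hxw, ih hwy⟩

theorem walkLen_congr (e : V ≃ W) (he : ∀ x y, r x y ↔ s (e x) (e y)) :
    ∀ k x y, walkLen r k x y ↔ walkLen s k (e x) (e y)
  | 0, _, _ => e.injective.eq_iff.symm
  | k + 1, x, y => by
    simp only [walkLen, he, walkLen_congr e he k]
    exact (e.surjective.exists (p := fun z => s (e x) z ∧ walkLen s k z (e y))).symm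

theorem ddiam_congr (e : V ≃ W) (he : ∀ x y, r x y ↔ s (e x) (e y)) : ddiam r = ddiam s := by
  have hdist (x y : V) : ddist r x y = ddist s (e x) (e y) := by
    simp only [ddist, walkLen_congr e he]
  simp only [ddiam, hdist]
  exact (congrArg iSup (funext fun x => e.iSup_comp (g := ddist s (e x)))).trans
    (e.iSup_comp (g := fun x => ⨆ y, ddist s x y))

theorem ddiam_le_of_forall_exists_walkLen {C : ℕ} (h : ∀ x y : V, ∃ k ≤ C, walkLen r k x y) :
    ddiam r ≤ C :=
  iSup₂_le fun x y =>
    let ⟨k, hk, hw⟩ := h x y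
    (iInf₂_le k hw).trans (by exact_mod_cast hk)

instance instDecidableWalkLen [Fintype V] [DecidableEq V] [DecidableRel r] :
    ∀ k (x y : V), Decidable (walkLen r k x y)
  | 0, x, y => inferInstanceAs (Decidable (x = y))
  | k + 1, x, y =>
    have := fun z => instDecidableWalkLen k z y
    inferInstanceAs (Decidable (∃ z, r x z ∧ walkLen r k z y))

end Walks

section MonomialArc

variable {K L : Type*} [Field K] [Field L] {m n : ℕ}

instance [DecidableEq K] : DecidableRel (monomialArc (F := K) m n) :=
  fun _ _ => inferInstanceAs (Decidable (_ = _))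

theorem ddiam_monomialArc_congr (e : K ≃+* L) :
    ddiam (monomialArc (F := K) m n) = ddiam (monomialArc (F := L) m n) :=
  ddiam_congr (e.toEquiv.prodCongr e.toEquiv) fun x y => by
    simp [monomialArc, ← map_pow, ← map_mul, ← map_add, e.injective.eq_iff]

theorem walkLen_monomialArc_four_s11 (hm : m ≠ 0) (hn : n ≠ 0) (s v t : K) :
    walkLen (monomialArc m n) 4 (1, s) (1, s + (v ^ m - t ^ n)) :=
  ⟨(t, t ^ n - s), by simp [monomialArc], (0, s - t ^ n), by simp [monomialArc, hn],
    (v, t ^ n - s), by simp [monomialArc, hm], _, by simp [monomialArc]; ring, rfl⟩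

theorem walkLen_monomialArc_two (hn : ∀ u : K, u ≠ 0 → u ^ n = 1) {u v : K} (hu : u ≠ 0)
    (hv : v ≠ 0) (w s : K) :
    walkLen (monomialArc m n) 2 (w, s) (v, s + (u ^ m - w ^ m)) :=
  ⟨(u, w ^ m - s), by simp [monomialArc, hn u hu], _, by simp [monomialArc, hn v hv]; ring, rfl⟩

variable [Fintype K] [DecidableEq K]

theorem walkLen_monomialArc_four_mul (hm : m ≠ 0) (hn : n ≠ 0) {k : ℕ} {s a : K}
    (ha : a ∈ k • ((univ.image (· ^ m) : Finset K) - univ.image (· ^ n))) :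
    walkLen (monomialArc m n) (4 * k) (1, s) (1, s + a) := by
  induction k generalizing a with
  | zero =>
    rw [zero_nsmul, mem_zero] at ha
    simp only [ha, add_zero]
    rfl
  | succ k ih =>
    rw [succ_nsmul, mem_add] at ha
    obtain ⟨b, hb, _, hc, rfl⟩ := ha
    simp only [mem_sub, mem_image, mem_univ, true_and] at hc
    obtain ⟨_, ⟨v, rfl⟩, _, ⟨t, rfl⟩, rfl⟩ := hc
    rw [← add_assoc]
    exact walkLen_add (ih hb) (walkLen_monomialArc_four_s11 hm hn _ v t)

-- Through intermediate vertices `v₁, …, v_k`, chaining `k + 1` two-step gadgets changes `s` by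
-- `(u₀ᵐ - wᵐ) + ∑ (uᵢᵐ - vᵢᵐ)`, which is where the hypothesis comes from.
theorem walkLen_monomialArc_two_mul (hn : ∀ u : K, u ≠ 0 → u ^ n = 1) {v : K} (hv : v ≠ 0)
    (k : ℕ) {w s s' : K}
    (h : s' - s + w ^ m ∈ ((univ.erase 0).image (· ^ m) : Finset K) +
      k • (((univ.erase 0).image (· ^ m) : Finset K) - (univ.erase 0).image (· ^ m))) :
    walkLen (monomialArc m n) (2 * (k + 1)) (w, s) (v, s') := by
  induction k generalizing w s with
  | zero =>
    rw [zero_nsmul, add_zero] at h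
    obtain ⟨u, hu, hum⟩ := mem_image.mp h
    convert walkLen_monomialArc_two hn (ne_of_mem_erase hu) hv w s using 3
    linear_combination -hum
  | succ k ih =>
    rw [succ_nsmul', ← add_assoc, mem_add] at h
    obtain ⟨_, hubc, y, hy, hsum⟩ := h
    simp only [mem_add, mem_sub, mem_image] at hubc
    obtain ⟨_, ⟨u, hu, rfl⟩, _, ⟨_, ⟨b, hb, rfl⟩, _, ⟨c, hc, rfl⟩, rfl⟩, rfl⟩ := hubc
    rw [show 2 * (k + 1 + 1) = 2 + 2 * (k + 1) by ring]
    refine walkLen_add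
      (walkLen_monomialArc_two hn (ne_of_mem_erase hu) (ne_of_mem_erase hc) w s) (ih ?_)
    convert add_mem_add (mem_image_of_mem (· ^ m) hb) hy using 1
    linear_combination -hsum

end MonomialArc

section Counting

variable {K : Type*} [Field K] [Fintype K] {m : ℕ}

theorem FiniteField.exists_pow_ne_one (hm : m ≠ 0) (hmK : m < Fintype.card K - 1) :
    ∃ c : K, c ≠ 0 ∧ c ^ m ≠ 1 := by
  classical
  obtain ⟨c, hc⟩ := exists_pow_ne_one_of_isCyclic (G := Kˣ) hm
    (by rwa [Nat.card_eq_fintype_card, Fintype.card_units])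
  exact ⟨c, c.ne_zero, fun h => hc (Units.ext (by simpa using h))⟩

variable [DecidableEq K]

theorem FiniteField.one_lt_card_image_pow_erase_zero (hm : m ≠ 0)
    (hmK : m < Fintype.card K - 1) : 1 < #((univ.erase 0).image (· ^ m) : Finset K) := by
  obtain ⟨c, hc0, hc⟩ := FiniteField.exists_pow_ne_one hm hmK
  exact one_lt_card_iff.mpr ⟨1, c ^ m, mem_image.mpr ⟨1, by simp, one_pow m⟩,
    mem_image.mpr ⟨c, by simp [hc0], rfl⟩, Ne.symm hc⟩

theorem FiniteField.two_lt_card_image_pow (hm : m ≠ 0) (hmK : m < Fintype.card K - 1) :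
    2 < #(univ.image (· ^ m) : Finset K) := by
  obtain ⟨c, hc0, hc⟩ := FiniteField.exists_pow_ne_one hm hmK
  exact two_lt_card_iff.mpr ⟨0, 1, c ^ m, mem_image.mpr ⟨0, mem_univ _, zero_pow hm⟩,
    mem_image.mpr ⟨1, mem_univ _, one_pow m⟩, mem_image.mpr ⟨c, mem_univ _, rfl⟩, zero_ne_one,
    (pow_ne_zero m hc0).symm, Ne.symm hc⟩

end Counting

namespace ZMod

variable {p m n : ℕ} [Fact p.Prime]

theorem min_le_card_add_nsmul {s t : Finset (ZMod p)} (hs : s.Nonempty) (ht : t.Nonempty)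
    (k : ℕ) : min p (#s + k * (#t - 1)) ≤ #(s + k • t) := by
  induction k with
  | zero => simp
  | succ k ih =>
    have hcd := cauchy_davenport Fact.out (hs.add (ht.nsmul (n := k))) ht
    rw [succ_nsmul, ← add_assoc]
    have := ht.card_pos
    rw [Nat.succ_mul]
    omega

theorem add_nsmul_eq_univ {s t : Finset (ZMod p)} (hs : s.Nonempty) (ht : t.Nonempty) {k : ℕ}
    (hk : p ≤ #s + k * (#t - 1)) : s + k • t = univ := by
  have := min_le_card_add_nsmul hs ht k
  refine eq_univ_of_card _ (le_antisymm (card_le_univ _) ?_)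
  rw [ZMod.card]
  omega

theorem exists_walkLen_monomialArc_le_of_lt_sub_one (hp : 5 ≤ p) (hm : m ≠ 0) (hmp : m < p - 1)
    (hn : n ≠ 0) (hnp : n < p - 1) (x y : ZMod p × ZMod p) :
    ∃ k ≤ 2 * p - 2, walkLen (monomialArc m n) k x y := by
  obtain ⟨x₁, x₂⟩ := x
  obtain ⟨y₁, y₂⟩ := y
  set S : Finset (ZMod p) := univ.image (· ^ m) - univ.image (· ^ n) with hSdef
  have hSne : S.Nonempty := (univ_nonempty.image _).sub (univ_nonempty.image _)
  have hS : 5 ≤ #S := by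
    have hcd := cauchy_davenport Fact.out (univ_nonempty.image (· ^ m : ZMod p → ZMod p))
      (univ_nonempty.image (· ^ n : ZMod p → ZMod p)).neg
    have hM := FiniteField.two_lt_card_image_pow (K := ZMod p) hm (by rwa [ZMod.card])
    have hN := FiniteField.two_lt_card_image_pow (K := ZMod p) hn (by rwa [ZMod.card])
    rw [card_neg] at hcd
    rw [hSdef, sub_eq_add_neg]
    omega
  set k := (p + 2) / 4
  have hcover : k • S = univ := by
    have := Nat.mul_le_mul_left k (show 4 ≤ #S - 1 by omega)
    simpa using add_nsmul_eq_univ (s := 0) (by simp) hSne (k := k) (by simp; omega)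
  have hwalk := walkLen_monomialArc_four_mul (s := x₁ ^ m - x₂) hm hn
    (hcover ▸ mem_univ (y₁ ^ n - y₂ - (x₁ ^ m - x₂)))
  refine ⟨1 + 4 * k + 1, by omega,
    walkLen_add (walkLen_add (walkLen_one.mpr ?_) hwalk) (walkLen_one.mpr ?_)⟩ <;>
  simp [monomialArc]

theorem exists_walkLen_monomialArc_le_of_eq_sub_one (hp : 5 ≤ p) (hm : m ≠ 0) (hmp : m < p - 1)
    (x y : ZMod p × ZMod p) : ∃ k ≤ 2 * p - 2, walkLen (monomialArc m (p - 1)) k x y := by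
  obtain ⟨x₁, x₂⟩ := x
  obtain ⟨y₁, y₂⟩ := y
  set M : Finset (ZMod p) := (univ.erase 0).image (· ^ m)
  have hMne : M.Nonempty := ⟨1, mem_image.mpr ⟨1, by simp, one_pow m⟩⟩
  have hM : 1 < #M := FiniteField.one_lt_card_image_pow_erase_zero hm (by rwa [ZMod.card])
  have hT : 2 < #(M - M) := by
    have hcd := cauchy_davenport Fact.out hMne hMne.neg
    rw [card_neg] at hcd
    rw [sub_eq_add_neg]
    omega
  have hodd : p % 2 = 1 := (Fact.out : p.Prime).eq_two_or_odd.resolve_left (by omega)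
  set k := (p - 1) / 2
  have hcover : M + k • (M - M) = univ := by
    have := Nat.mul_le_mul_left k (show 2 ≤ #(M - M) - 1 by omega)
    exact add_nsmul_eq_univ hMne (hMne.sub hMne) (by omega)
  have hwalk {v s' : ZMod p} (hv : v ≠ 0) :
      walkLen (monomialArc m (p - 1)) (2 * (k + 1)) (x₁, x₂) (v, s') := by
    have hmem : s' - x₂ + x₁ ^ m ∈ M + k • (M - M) := hcover ▸ mem_univ _
    exact walkLen_monomialArc_two_mul (fun _ => pow_card_sub_one_eq_one) hv k hmem
  by_cases hy : y₁ = 0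
  · subst hy
    refine ⟨2 * (k + 1) + 1, by omega, walkLen_add (hwalk (s' := -y₂) one_ne_zero) ?_⟩
    exact walkLen_one.mpr (by simp [monomialArc, zero_pow (show p - 1 ≠ 0 by omega)])
  · exact ⟨2 * (k + 1), by omega, hwalk hy⟩

theorem three_exists_walkLen_monomialArc_le_four :
    ∀ n ∈ ({1, 2} : Finset ℕ), ∀ x y : ZMod 3 × ZMod 3,
      ∃ k ≤ 4, walkLen (monomialArc 1 n) k x y := by
  decide

theorem exists_walkLen_monomialArc_le (hm : 1 ≤ m) (hmn : m ≤ n) (hn : n ≤ p - 1)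
    (h : m ≠ p - 1 ∨ n ≠ p - 1) (x y : ZMod p × ZMod p) :
    ∃ k ≤ 2 * p - 2, walkLen (monomialArc m n) k x y := by
  have hp : p.Prime := Fact.out
  have hp2 : p ≠ 2 := by rintro rfl; omega
  have hp4 : p ≠ 4 := by rintro rfl; norm_num at hp
  obtain rfl | hp5 : p = 3 ∨ 5 ≤ p := by have := hp.two_le; omega
  · obtain rfl : m = 1 := by omega
    exact three_exists_walkLen_monomialArc_le_four n (by simp; omega) x y
  obtain rfl | hnp : n = p - 1 ∨ n < p - 1 := by omega
  · exact exists_walkLen_monomialArc_le_of_eq_sub_one hp5 (by omega) (by omega) x y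
  · exact exists_walkLen_monomialArc_le_of_lt_sub_one hp5 (by omega) (by omega) (by omega) hnp
      x y

end ZMod

theorem diam_le_two_p_sub_two {p m n : ℕ} (hp : p.Prime)
    (F : Type*) [Field F] [Fintype F] (hF : Fintype.card F = p)
    (hm : 1 ≤ m) (hmn : m ≤ n) (hn : n ≤ p - 1)
    (h : m ≠ p - 1 ∨ n ≠ p - 1) :
    ddiam (monomialArc (F := F) m n) ≤ ((2 * p - 2 : ℕ) : ℕ∞) := by
  have := Fact.mk hp
  rw [← ddiam_monomialArc_congr (ZMod.ringEquivOfPrime F hp hF)]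
  exact ddiam_le_of_forall_exists_walkLen (ZMod.exists_walkLen_monomialArc_le hm hmn hn h)
end
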